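/- Let p = {p_n}_{n=0}^∞ be a sequence of real numbers. Then p is TN_2 if and only if p is non-negative and for all positive integers m and all partitions λ, μ with m non-negative parts such that λ dominates μ, one has p_λ ≤ p_μ, where p_ν = ∏_{i=1}^m p_{ν(i)}. -/

import Mathlib

open Finset

noncomputable section

/-- The ℕ×ℕ Toeplitz matrix of a sequence `p`, with `(T_p)_{i,j} = p_{j-i}`
(and `0` when `j < i`, i.e. `p_n = 0` for negative `n`). -/
def toeplitz (p : ℕ → ℝ) : Matrix ℕ ℕ ℝ :=
  fun i j => if i ≤ j then p (j - i) else 0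

/-- A matrix is totally non-negative of order `k` iff every minor of size at
most `k` (rows and columns chosen strictly increasingly) is non-negative. -/
def IsTN (k : ℕ) (M : Matrix ℕ ℕ ℝ) : Prop :=
  ∀ l : ℕ, l ≤ k → ∀ r c : Fin l → ℕ, StrictMono r → StrictMono c →
    0 ≤ (M.submatrix r c).det

/-- A matrix is totally positive of order `k` iff every minor of size at
most `k` is positive. -/
def IsTP (k : ℕ) (M : Matrix ℕ ℕ ℝ) : Prop :=
  ∀ l : ℕ, l ≤ k → ∀ r c : Fin l → ℕ, StrictMono r → StrictMono c →
    0 < (M.submatrix r c).det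

/-- The matrix `S_p` with `(S_p)_{i,j} = (p^i)_j`, the coefficient of `x^j` in
`p(x)^i` where `p(x) = Σ p_n x^n` (and `p(x)^0 = 1`). -/
def sMatrix (p : ℕ → ℝ) : Matrix ℕ ℕ ℝ :=
  fun i j => PowerSeries.coeff j (PowerSeries.mk p ^ i)

/-- A partition: a non-increasing function from the positive integers to ℕ with
finite support (we set the irrelevant value at `0` to be `0`). -/
structure PartitionSeq where
  part : ℕ → ℕ
  zero : part 0 = 0
  antitone : ∀ ⦃i j : ℕ⦄, 1 ≤ i → i ≤ j → part j ≤ part i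
  finSupp : (Function.support part).Finite

/-- The weight `|λ|` of a partition. -/
def PartitionSeq.weight (lam : PartitionSeq) : ℕ := ∑ᶠ i, lam.part i

/-- `λ` dominates `μ`: equal weights and partial sums of `λ` are at least
those of `μ`. -/
def PartitionSeq.Dominates (lam mu : PartitionSeq) : Prop :=
  lam.weight = mu.weight ∧
  ∀ j : ℕ, 1 ≤ j →
    ∑ i ∈ Finset.Icc 1 j, mu.part i ≤ ∑ i ∈ Finset.Icc 1 j, lam.part i

/-- `f(λ, p(x), t, x) = ∏_i (p(x)^{λ(i)} |_t)`, the product over rows of the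
truncations to degree `t` of powers of the generating function. -/
def fPoly (lam : PartitionSeq) (p : ℕ → ℝ) (t : ℕ) : Polynomial ℝ :=
  ∏ᶠ i : ℕ, PowerSeries.trunc (t + 1) (PowerSeries.mk p ^ lam.part i)

/-- `P(E(λ,X,j,t))` for `X` with probability mass function `p`: the coefficient
of `x^j` in `∏_i ((p_X(x))^{λ(i)} |_t)`. -/
def probE (p : ℕ → ℝ) (lam : PartitionSeq) (j t : ℕ) : ℝ :=
  (fPoly lam p t).coeff j

/-- Condition `C(λ,μ,X)`: `P(E(λ,X,j,t)) ≤ P(E(μ,X,j,t))` for all `j, t ∈ ℕ`. -/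
def CondC (p : ℕ → ℝ) (lam mu : PartitionSeq) : Prop :=
  ∀ j t : ℕ, probE p lam j t ≤ probE p mu j t

/-!
The 2 × 2 minor of `T_p` with rows `x < x + s` and columns `x + s + d < x + s + d + t` is
`p (d + s) * p (d + t) - p (d + s + t) * p d`; any other 2 × 2 minor has a zero entry below the
diagonal and is a product of two entries. So `p` is TN₂ iff `p ≥ 0` and
`p (d + s + t) * p d ≤ p (d + s) * p (d + t)`, the two-part case `(d + s + t, d) ⊵ (d + s, d + t)`.
Conversely, if `λ ⊵ μ` and `λ ≠ μ`, moving one unit from a part of `λ` to a later part where `λ`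
falls short of `μ` (a Robin Hood transfer) keeps `λ ⊵ μ`, brings `λ` closer to `μ`, and by the
two-part inequality does not decrease `p_λ`.
-/

section Transfer

variable {ι : Type*} [DecidableEq ι]

def transfer (f : ι → ℕ) (i k : ι) : ι → ℕ := f - Pi.single i 1 + Pi.single k 1

variable {f : ι → ℕ} {i k : ι}

lemma transfer_apply_of_ne {x : ι} (hi : x ≠ i) (hk : x ≠ k) : transfer f i k x = f x := by
  simp [transfer, hi, hk]

lemma transfer_apply_left (hik : i ≠ k) : transfer f i k i = f i - 1 := by
  simp [transfer, hik]

lemma transfer_apply_right (hik : i ≠ k) : transfer f i k k = f k + 1 := by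
  simp [transfer, hik.symm]

lemma sum_transfer_add (hi : 1 ≤ f i) (s : Finset ι) :
    ∑ x ∈ s, transfer f i k x + (if i ∈ s then 1 else 0) =
      ∑ x ∈ s, f x + if k ∈ s then 1 else 0 := by
  rw [← sum_pi_single' i 1 s, ← sum_pi_single' k 1 s, ← sum_add_distrib, ← sum_add_distrib]
  refine sum_congr rfl fun x _ => ?_
  by_cases hx : x = i
  · subst hx; simp only [transfer, Pi.add_apply, Pi.sub_apply, Pi.single_eq_same]; omega
  · simp [transfer, hx]

lemma sum_dist_transfer_lt [Fintype ι] {g : ι → ℕ} (hik : i ≠ k) (hi : g i < f i)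
    (hk : f k < g k) :
    ∑ x, Nat.dist (transfer f i k x) (g x) < ∑ x, Nat.dist (f x) (g x) := by
  refine sum_lt_sum (fun x _ => ?_) ⟨i, mem_univ i, ?_⟩
  · by_cases hxi : x = i
    · subst hxi; rw [transfer_apply_left hik]; simp only [Nat.dist]; omega
    by_cases hxk : x = k
    · subst hxk; rw [transfer_apply_right hik]; simp only [Nat.dist]; omega
    rw [transfer_apply_of_ne hxi hxk]
  · rw [transfer_apply_left hik]; simp only [Nat.dist]; omega

end Transfer

lemma prod_le_prod_of_eq_off_pair {ι R : Type*} [Fintype ι] [DecidableEq ι] [CommSemiring R]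
    [PartialOrder R] [IsOrderedRing R] {F G : ι → R} {i k : ι} (hik : i ≠ k)
    (hF : ∀ x, 0 ≤ F x) (hFG : ∀ x, x ≠ i → x ≠ k → F x = G x)
    (hpair : F i * F k ≤ G i * G k) : ∏ x, F x ≤ ∏ x, G x := by
  have hsub : ({i, k} : Finset ι) ⊆ univ := subset_univ _
  have hrest : ∏ x ∈ univ \ {i, k}, F x = ∏ x ∈ univ \ {i, k}, G x :=
    prod_congr rfl fun x hx => by simp only [mem_sdiff, mem_insert, mem_singleton] at hx; grind
  rw [← prod_sdiff hsub, ← prod_sdiff hsub (f := G), prod_pair hik, prod_pair hik, ← hrest]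
  exact mul_le_mul_of_nonneg_left hpair (prod_nonneg fun x _ => hF x)

section Dominance

variable {ι : Type*} [LinearOrder ι] [LocallyFiniteOrderBot ι] [Fintype ι]

def Dominates (f g : ι → ℕ) : Prop :=
  ∑ i, f i = ∑ i, g i ∧ ∀ j, ∑ i ∈ Iic j, g i ≤ ∑ i ∈ Iic j, f i

variable {f g : ι → ℕ}

lemma Dominates.exists_transfer (hfg : Dominates f g) (hne : f ≠ g) :
    ∃ i k, i < k ∧ g i < f i ∧ f k < g k ∧ ∀ l < k, g l ≤ f l := by
  have hdeficit : {k | f k < g k}.Nonempty := by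
    by_contra! hempty
    have hle : ∀ x ∈ univ, g x ≤ f x := fun x _ => not_lt.mp fun hx => hempty.subset hx
    exact hne (funext fun x => ((sum_eq_sum_iff_of_le hle).mp hfg.1.symm x (mem_univ x)).symm)
  obtain ⟨k, hk, hmin⟩ := wellFounded_lt.has_min _ hdeficit
  have hbefore : ∀ l < k, g l ≤ f l := fun l hl => not_lt.mp fun h => hmin l h hl
  have hlt : ∑ l ∈ Iio k, g l < ∑ l ∈ Iio k, f l := by
    have := hfg.2 k
    rw [← Iio_insert, sum_insert notMem_Iio_self, sum_insert notMem_Iio_self] at this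
    have : f k < g k := hk
    omega
  obtain ⟨i, hi, hgf⟩ := exists_lt_of_sum_lt hlt
  exact ⟨i, k, mem_Iio.mp hi, hgf, hk, hbefore⟩

lemma Dominates.transfer {i k : ι} (hfg : Dominates f g) (hik : i < k) (hi : g i < f i)
    (hbefore : ∀ l < k, g l ≤ f l) : Dominates (transfer f i k) g := by
  have hsum := fun s => sum_transfer_add (k := k) (show 1 ≤ f i by omega) s
  refine ⟨?_, fun j => ?_⟩
  · have := hsum univ
    simp only [mem_univ, if_true, add_left_inj] at this
    exact this.trans hfg.1
  · have := hsum (Iic j)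
    have hj := hfg.2 j
    simp only [mem_Iic] at this
    by_cases hij : i ≤ j
    · by_cases hkj : k ≤ j
      · simp only [hij, hkj, if_true] at this; omega
      · have hstrict : ∑ l ∈ Iic j, g l < ∑ l ∈ Iic j, f l :=
          sum_lt_sum (fun l hl => hbefore l ((mem_Iic.mp hl).trans_lt (not_le.mp hkj)))
            ⟨i, mem_Iic.mpr hij, hi⟩
        simp only [hij, hkj, if_true, if_false] at this; omega
    · have hkj : ¬ k ≤ j := fun h => hij (hik.le.trans h)
      simp only [hij, hkj, if_false] at this; omega

end Dominance

section PartitionProducts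

variable {R : Type*} [CommSemiring R] [PartialOrder R] [IsOrderedRing R] {p : ℕ → R}

lemma prod_le_prod_transfer {ι : Type*} [Fintype ι] [DecidableEq ι] (hp : ∀ n, 0 ≤ p n)
    (hp2 : ∀ d s t, p (d + s + t) * p d ≤ p (d + s) * p (d + t))
    {f : ι → ℕ} {i k : ι} (hik : i ≠ k) (hlt : f k < f i) :
    ∏ x, p (f x) ≤ ∏ x, p (transfer f i k x) := by
  refine prod_le_prod_of_eq_off_pair hik (fun x => hp _)
    (fun x hxi hxk => by rw [transfer_apply_of_ne hxi hxk]) ?_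
  rw [transfer_apply_left hik, transfer_apply_right hik]
  have := hp2 (f k) 1 (f i - 1 - f k)
  rwa [show f k + 1 + (f i - 1 - f k) = f i by omega,
    show f k + (f i - 1 - f k) = f i - 1 by omega, mul_comm (p (f k + 1))] at this

theorem prod_le_prod_of_dominates {ι : Type*} [LinearOrder ι] [LocallyFiniteOrderBot ι]
    [Fintype ι] (hp : ∀ n, 0 ≤ p n)
    (hp2 : ∀ d s t, p (d + s + t) * p d ≤ p (d + s) * p (d + t))
    {g : ι → ℕ} (hg : Antitone g) (f : ι → ℕ) (hfg : Dominates f g) :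
    ∏ x, p (f x) ≤ ∏ x, p (g x) := by
  by_cases hne : f = g
  · rw [hne]
  obtain ⟨i, k, hik, hi, hk, hbefore⟩ := hfg.exists_transfer hne
  calc ∏ x, p (f x)
      ≤ ∏ x, p (transfer f i k x) :=
        prod_le_prod_transfer hp hp2 hik.ne (hk.trans ((hg hik.le).trans_lt hi))
    _ ≤ ∏ x, p (g x) :=
        prod_le_prod_of_dominates hp hp2 hg _ (hfg.transfer hik hi hbefore)
termination_by ∑ x, Nat.dist (f x) (g x)
decreasing_by exact sum_dist_transfer_lt hik.ne hi hk

end PartitionProducts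

section Toeplitz

variable {p : ℕ → ℝ}

lemma toeplitz_apply_of_le {i j : ℕ} (h : i ≤ j) : toeplitz p i j = p (j - i) := if_pos h

lemma toeplitz_apply_of_lt {i j : ℕ} (h : j < i) : toeplitz p i j = 0 := if_neg h.not_ge

lemma toeplitz_nonneg (hp : ∀ n, 0 ≤ p n) (i j : ℕ) : 0 ≤ toeplitz p i j := by
  unfold toeplitz; split_ifs <;> simp [hp]

lemma det_toeplitz_submatrix_fin_two {r c : Fin 2 → ℕ} (hr : r 0 ≤ r 1) (hrc : r 1 ≤ c 0)
    (hc : c 0 ≤ c 1) :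
    ((toeplitz p).submatrix r c).det =
      p (c 0 - r 0) * p (c 1 - r 1) - p (c 1 - r 0) * p (c 0 - r 1) := by
  rw [Matrix.det_fin_two]
  simp only [Matrix.submatrix_apply]
  rw [toeplitz_apply_of_le (by omega), toeplitz_apply_of_le (by omega),
    toeplitz_apply_of_le (by omega), toeplitz_apply_of_le (by omega)]

lemma det_toeplitz_submatrix_fin_two_nonneg (hp : ∀ n, 0 ≤ p n)
    (hp2 : ∀ d s t, p (d + s + t) * p d ≤ p (d + s) * p (d + t))
    {r c : Fin 2 → ℕ} (hr : StrictMono r) (hc : StrictMono c) :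
    0 ≤ ((toeplitz p).submatrix r c).det := by
  have hr01 : r 0 < r 1 := hr Fin.zero_lt_one
  have hc01 : c 0 < c 1 := hc Fin.zero_lt_one
  rcases le_or_gt (r 1) (c 0) with h | h
  · rw [det_toeplitz_submatrix_fin_two hr01.le h hc01.le, sub_nonneg]
    convert hp2 (c 0 - r 1) (r 1 - r 0) (c 1 - c 0) using 3 <;> omega
  · rw [Matrix.det_fin_two]
    simp only [Matrix.submatrix_apply]
    rw [toeplitz_apply_of_lt h, mul_zero, sub_zero]
    exact mul_nonneg (toeplitz_nonneg hp _ _) (toeplitz_nonneg hp _ _)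

theorem isTN_two_toeplitz_iff :
    IsTN 2 (toeplitz p) ↔
      (∀ n, 0 ≤ p n) ∧ ∀ d s t, p (d + s + t) * p d ≤ p (d + s) * p (d + t) := by
  constructor
  · intro hTN
    have hp : ∀ n, 0 ≤ p n := fun n => by
      have hentry := hTN 1 (by norm_num) ![0] ![n] (Subsingleton.strictMono _)
        (Subsingleton.strictMono _)
      rwa [Matrix.det_fin_one, Matrix.submatrix_apply, Matrix.cons_val_zero, Matrix.cons_val_zero,
        toeplitz_apply_of_le (Nat.zero_le n)] at hentry
    refine ⟨hp, fun d s t => ?_⟩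
    rcases Nat.eq_zero_or_pos s with rfl | hs
    · simp [mul_comm]
    rcases Nat.eq_zero_or_pos t with rfl | ht
    · simp
    have hminor := hTN 2 le_rfl ![0, s] ![d + s, d + s + t] (by simp [hs]) (by simp [ht])
    rw [det_toeplitz_submatrix_fin_two (by simp) (by simp) (by simp), sub_nonneg] at hminor
    simp only [Matrix.cons_val_zero, Matrix.cons_val_one, Matrix.cons_val_fin_one] at hminor
    convert hminor using 3 <;> omega
  · rintro ⟨hp, hp2⟩ l hl r c hr hc
    interval_cases l
    · simp
    · simpa using toeplitz_nonneg hp (r 0) (c 0)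
    · exact det_toeplitz_submatrix_fin_two_nonneg hp hp2 hr hc

end Toeplitz

lemma dominates_of_partialSums {m : ℕ} {lam mu : Fin m → ℕ} (hsum : ∑ i, lam i = ∑ i, mu i)
    (hpartial : ∀ j : ℕ, 1 ≤ j → j ≤ m →
      ∑ i ∈ univ.filter (fun i : Fin m => (i : ℕ) < j), mu i ≤
        ∑ i ∈ univ.filter (fun i : Fin m => (i : ℕ) < j), lam i) :
    Dominates lam mu := by
  refine ⟨hsum, fun j => ?_⟩
  have hIic : Iic j = univ.filter (fun i : Fin m => (i : ℕ) < j + 1) := by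
    ext i
    simp only [mem_Iic, mem_filter, mem_univ, true_and, Fin.le_def, Nat.lt_succ_iff]
  rw [hIic]
  exact hpartial (j + 1) j.val.succ_pos j.isLt

/-- **Lemma (characterization of TN₂), (i) ↔ (iii).** `p ∈ TN₂` iff `p` is
non-negative and for all positive integers `m` and all partitions `λ, μ` with
`m` non-negative parts with `λ ⊵ μ`, one has `p_λ ≤ p_μ`. -/
theorem TN2_iff_partition_products (p : ℕ → ℝ) :
    IsTN 2 (toeplitz p) ↔
      ((∀ n, 0 ≤ p n) ∧
        ∀ m : ℕ, 1 ≤ m → ∀ lam mu : Fin m → ℕ, Antitone lam → Antitone mu →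
          (∑ i, lam i = ∑ i, mu i) →
          (∀ j : ℕ, 1 ≤ j → j ≤ m →
            ∑ i ∈ Finset.univ.filter (fun i : Fin m => (i : ℕ) < j), mu i ≤
              ∑ i ∈ Finset.univ.filter (fun i : Fin m => (i : ℕ) < j), lam i) →
          ∏ i, p (lam i) ≤ ∏ i, p (mu i)) := by
  rw [isTN_two_toeplitz_iff]
  constructor
  · rintro ⟨hp, hp2⟩
    refine ⟨hp, fun m _ lam mu _ hmu hsum hpartial => ?_⟩
    exact prod_le_prod_of_dominates hp hp2 hmu lam (dominates_of_partialSums hsum hpartial)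
  · rintro ⟨hp, hprod⟩
    refine ⟨hp, fun d s t => ?_⟩
    wlog hts : t ≤ s generalizing s t
    · simpa only [add_right_comm, mul_comm] using this t s (by omega)
    simpa [Fin.prod_univ_two] using hprod 2 one_le_two ![d + s + t, d] ![d + s, d + t]
      (antitone_vecEmpty.vecCons (show d ≤ d + s + t by omega)) (by simpa)
      (by simp only [Fin.sum_univ_two, Matrix.cons_val_zero, Matrix.cons_val_one]; omega)
      (fun j hj1 hj2 => by interval_cases j <;> simp [Finset.sum_filter, Fin.sum_univ_two]; omega)
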